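/- Let (L, Δ, φ_L, α) be a multiplicative Hom-Lie CoDer pair over K, i.e. one additionally satisfying (α ⊗ α)∘Δ = Δ∘α. On the dual space L* define the bracket [f, g](l) = (f ⊗ g)(Δ(l)) (meaning f(l₁)g(l₂) when Δ(l) = l₁ ⊗ l₂), and the linear maps α*(f) = f∘α and φ_L*(f) = f∘φ_L for f, g ∈ L*, l ∈ L. Then (L*, [·,·], φ_L*, α*) is a Hom-LieDer pair; in particular φ_L*([f, g]) = [φ_L*(f), α*(g)] + [α*(f), φ_L*(g)] for all f, g ∈ L*. -/
import Mathlib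


open scoped TensorProduct

/-- The cyclic permutation ξ : x⊗y⊗z ↦ y⊗z⊗x on `L ⊗ (L ⊗ L)`. -/
noncomputable def cyc (K : Type*) [Field K] (L : Type*) [AddCommGroup L] [Module K L] :
    L ⊗[K] (L ⊗[K] L) →ₗ[K] L ⊗[K] (L ⊗[K] L) :=
  (TensorProduct.assoc K L L L).toLinearMap ∘ₗ (TensorProduct.comm K L (L ⊗[K] L)).toLinearMap

/-- A Hom-Lie coalgebra: Δ = −τ∘Δ and (1 + ξ + ξ²)∘(α ⊗ Δ)∘Δ = 0. -/
def IsHomLieCoalgebra {K : Type*} [Field K] {L : Type*} [AddCommGroup L] [Module K L]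
    (Δ : L →ₗ[K] L ⊗[K] L) (α : L →ₗ[K] L) : Prop :=
  ((TensorProduct.comm K L L).toLinearMap ∘ₗ Δ = -Δ) ∧
  ((LinearMap.id + cyc K L + cyc K L ∘ₗ cyc K L) ∘ₗ (TensorProduct.map α Δ ∘ₗ Δ) = 0)

/-- φ is an α-coderivation of Δ. -/
def IsCoderivation {K : Type*} [Field K] {L : Type*} [AddCommGroup L] [Module K L]
    (Δ : L →ₗ[K] L ⊗[K] L) (α φ : L →ₗ[K] L) : Prop :=
  Δ ∘ₗ φ = TensorProduct.map φ α ∘ₗ Δ + TensorProduct.map α φ ∘ₗ Δ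

/-- A Hom-Lie CoDer pair (L, Δ, φ, α). -/
def IsHomLieCoDerPair {K : Type*} [Field K] {L : Type*} [AddCommGroup L] [Module K L]
    (Δ : L →ₗ[K] L ⊗[K] L) (φ α : L →ₗ[K] L) : Prop :=
  IsHomLieCoalgebra Δ α ∧ IsCoderivation Δ α φ

/-- A (multiplicative) Hom-LieDer pair: a skew-symmetric bilinear bracket `b`, a
multiplicative structure map `β` satisfying Hom-Jacobi, and a `β`-derivation `ψ`. -/
def IsHomLieDerPair {K : Type*} [Field K] {A : Type*} [AddCommGroup A] [Module K A]
    (b : A →ₗ[K] A →ₗ[K] A) (ψ β : A →ₗ[K] A) : Prop :=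
  (∀ x y, b x y = - b y x) ∧
  (∀ x y, β (b x y) = b (β x) (β y)) ∧
  (∀ x y z, b (β x) (b y z) + b (β y) (b z x) + b (β z) (b x y) = 0) ∧
  (∀ x y, ψ (b x y) = b (ψ x) (β y) + b (β x) (ψ y))

/-- The dual bracket on L* induced by a cobracket Δ: [f,g](l) = (f ⊗ g)(Δ l). -/
noncomputable def dualBracket {K : Type*} [Field K] {L : Type*} [AddCommGroup L] [Module K L]
    (Δ : L →ₗ[K] L ⊗[K] L) :
    Module.Dual K L →ₗ[K] Module.Dual K L →ₗ[K] Module.Dual K L :=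
  TensorProduct.curry (Δ.dualMap ∘ₗ TensorProduct.dualDistrib K L L)


section Aux
variable {K : Type*} [Field K] {L : Type*} [AddCommGroup L] [Module K L]

noncomputable def E2 (f g : Module.Dual K L) : Module.Dual K (L ⊗[K] L) :=
  TensorProduct.dualDistrib K L L (f ⊗ₜ g)

@[simp] lemma E2_tmul (f g : Module.Dual K L) (x y : L) :
    E2 f g (x ⊗ₜ[K] y) = f x * g y := by
  simp [E2]

noncomputable def E3 (f g h : Module.Dual K L) : Module.Dual K (L ⊗[K] (L ⊗[K] L)) :=
  TensorProduct.dualDistrib K L (L ⊗[K] L) (f ⊗ₜ E2 g h)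

@[simp] lemma E3_tmul (f g h : Module.Dual K L) (x : L) (t : L ⊗[K] L) :
    E3 f g h (x ⊗ₜ[K] t) = f x * E2 g h t := by
  induction t using TensorProduct.induction_on with
  | zero => simp [E3]
  | tmul y z => simp [E3]
  | add a b ha hb => simp [TensorProduct.tmul_add, ha, hb, mul_add]

lemma E2_comm (f g : Module.Dual K L) (t : L ⊗[K] L) :
    E2 f g ((TensorProduct.comm K L L) t) = E2 g f t := by
  induction t using TensorProduct.induction_on with
  | zero => simp
  | tmul x y => simp [mul_comm]
  | add a b ha hb => simp [ha, hb]

lemma E2_map (f g : Module.Dual K L) (p q : L →ₗ[K] L) (t : L ⊗[K] L) :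
    E2 f g (TensorProduct.map p q t) = E2 (f ∘ₗ p) (g ∘ₗ q) t := by
  induction t using TensorProduct.induction_on with
  | zero => simp
  | tmul x y => simp
  | add a b ha hb => simp [ha, hb]

lemma E2_mapE3 (f g h : Module.Dual K L) (α : L →ₗ[K] L) (Δ : L →ₗ[K] L ⊗[K] L)
    (t : L ⊗[K] L) :
    E2 (f ∘ₗ α) ((E2 g h) ∘ₗ Δ) t = E3 f g h (TensorProduct.map α Δ t) := by
  induction t using TensorProduct.induction_on with
  | zero => simp
  | tmul x y => simp
  | add a b ha hb => simp [ha, hb]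

lemma E3_cyc (f g h : Module.Dual K L) (t : L ⊗[K] (L ⊗[K] L)) :
    E3 f g h (cyc K L t) = E3 h f g t := by
  induction t using TensorProduct.induction_on with
  | zero => simp
  | tmul x s =>
    induction s using TensorProduct.induction_on with
    | zero => simp
    | tmul y z => simp [cyc]; ring
    | add a b ha hb => simp only [TensorProduct.tmul_add, map_add, ha, hb]
  | add a b ha hb => simp [ha, hb]

lemma dualBracket_apply' (Δ : L →ₗ[K] L ⊗[K] L) (f g : Module.Dual K L) (l : L) :
    dualBracket Δ f g l = E2 f g (Δ l) := by
  simp [dualBracket, E2]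

lemma dualBracket_eq (Δ : L →ₗ[K] L ⊗[K] L) (f g : Module.Dual K L) :
    dualBracket Δ f g = (E2 f g) ∘ₗ Δ := by
  ext l; simp [dualBracket_apply' ]

end Aux

/-- If (L, Δ, φ_L, α) is a multiplicative Hom-Lie CoDer pair, then
(L*, [·,·], φ_L*, α*) with [f,g] = (f ⊗ g)∘Δ, α*(f) = f∘α, φ_L*(f) = f∘φ_L is a
Hom-LieDer pair; in particular φ_L*([f,g]) = [φ_L*(f), α*(g)] + [α*(f), φ_L*(g)]. -/
theorem dual_of_homLieCoDerPair_isHomLieDerPair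
    {K : Type*} [Field K] [CharZero K] {L : Type*} [AddCommGroup L] [Module K L]
    (Δ : L →ₗ[K] L ⊗[K] L) (φL α : L →ₗ[K] L)
    (hpair : IsHomLieCoDerPair Δ φL α)
    (hmult : TensorProduct.map α α ∘ₗ Δ = Δ ∘ₗ α) :
    IsHomLieDerPair (dualBracket Δ) φL.dualMap α.dualMap ∧
    (∀ f g : Module.Dual K L,
      φL.dualMap (dualBracket Δ f g) =
        dualBracket Δ (φL.dualMap f) (α.dualMap g)
          + dualBracket Δ (α.dualMap f) (φL.dualMap g)) := by
  obtain ⟨⟨hskew, hjac⟩, hcod⟩ := hpair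
  have key : ∀ f g : Module.Dual K L,
      φL.dualMap (dualBracket Δ f g) =
        dualBracket Δ (φL.dualMap f) (α.dualMap g)
          + dualBracket Δ (α.dualMap f) (φL.dualMap g) := by
    intro f g
    ext l
    have h1 : Δ (φL l) = TensorProduct.map φL α (Δ l) + TensorProduct.map α φL (Δ l) :=
      congrFun (congrArg (fun (m : L →ₗ[K] L ⊗[K] L) => (m : L → L ⊗[K] L)) hcod) l
    simp only [LinearMap.dualMap_apply, LinearMap.add_apply, dualBracket_apply']
    rw [h1]
    simp only [map_add, E2_map]
    rfl
  refine ⟨⟨?_, ?_, ?_, ?_⟩, key⟩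
  · intro f g
    ext l
    have h1 : (TensorProduct.comm K L L) (Δ l) = -(Δ l) :=
      congrFun (congrArg (fun (m : L →ₗ[K] L ⊗[K] L) => (m : L → L ⊗[K] L)) hskew) l
    have := E2_comm g f (Δ l)
    rw [h1, map_neg] at this
    simp only [dualBracket_apply', LinearMap.neg_apply]
    linear_combination -this
  · intro f g
    ext l
    have h1 : TensorProduct.map α α (Δ l) = Δ (α l) :=
      congrFun (congrArg (fun (m : L →ₗ[K] L ⊗[K] L) => (m : L → L ⊗[K] L)) hmult) l
    simp only [LinearMap.dualMap_apply, dualBracket_apply']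
    rw [← h1, E2_map]
    rfl
  · intro f g h
    ext l
    have hj : (TensorProduct.map α Δ (Δ l)) + cyc K L (TensorProduct.map α Δ (Δ l))
        + cyc K L (cyc K L (TensorProduct.map α Δ (Δ l))) = 0 := by
      have := congrFun (congrArg (fun (m : L →ₗ[K] L ⊗[K] (L ⊗[K] L)) =>
        (m : L → L ⊗[K] (L ⊗[K] L))) hjac) l
      simpa using this
    set T := TensorProduct.map α Δ (Δ l) with hT
    simp only [LinearMap.add_apply, LinearMap.zero_apply, dualBracket_apply',
      LinearMap.dualMap_apply]
    have e1 : dualBracket Δ g h = (E2 g h) ∘ₗ Δ := dualBracket_eq Δ g h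
    have e2 : dualBracket Δ h f = (E2 h f) ∘ₗ Δ := dualBracket_eq Δ h f
    have e3 : dualBracket Δ f g = (E2 f g) ∘ₗ Δ := dualBracket_eq Δ f g
    rw [e1, e2, e3]
    have c1 : E2 (f ∘ₗ α) ((E2 g h) ∘ₗ Δ) (Δ l) = E3 f g h T := E2_mapE3 f g h α Δ (Δ l)
    have c2 : E2 (g ∘ₗ α) ((E2 h f) ∘ₗ Δ) (Δ l) = E3 g h f T := E2_mapE3 g h f α Δ (Δ l)
    have c3 : E2 (h ∘ₗ α) ((E2 f g) ∘ₗ Δ) (Δ l) = E3 h f g T := E2_mapE3 h f g α Δ (Δ l)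
    have d2 : E3 g h f T = E3 f g h (cyc K L (cyc K L T)) := by
      rw [E3_cyc, E3_cyc]
    have d3 : E3 h f g T = E3 f g h (cyc K L T) := by rw [E3_cyc]
    have hfa : (α.dualMap f : Module.Dual K L) = f ∘ₗ α := rfl
    have hga : (α.dualMap g : Module.Dual K L) = g ∘ₗ α := rfl
    have hha : (α.dualMap h : Module.Dual K L) = h ∘ₗ α := rfl
    rw [hfa, hga, hha, c1, c2, c3, d2, d3]
    have : E3 f g h T + E3 f g h (cyc K L T) + E3 f g h (cyc K L (cyc K L T))
        = E3 f g h (T + cyc K L T + cyc K L (cyc K L T)) := by simp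
    rw [show E3 f g h T + E3 f g h (cyc K L (cyc K L T)) + E3 f g h (cyc K L T)
        = E3 f g h T + E3 f g h (cyc K L T) + E3 f g h (cyc K L (cyc K L T)) by ring,
      this, hj, map_zero]
  · exact key
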